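/- arXiv:2312.08691 — 2 statements merged into one kernel-verified Lean document; each statement's English description precedes it below -/
import Mathlib

section
/- Let A = (a_{ij}) be an n×n real matrix such that D(A) is a tree digraph belonging to the class 𝒟 and Δ_A ≠ 0. Then the group inverse A^# = (α_{ij}) exists and α_{ij} = μ_{ij}/Δ_A for all i, j. -/
open Matrix

/-- Adjacency in a digraph given by relation `G`: a 2-cycle between distinct `i` and `j`. -/
def Adjd {n : ℕ} (G : Fin n → Fin n → Prop) (i j : Fin n) : Prop :=
  i ≠ j ∧ G i j ∧ G j i

/-- `G` is a simple symmetric digraph: no loops and edges come in both directions. -/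
def IsSSD {n : ℕ} (G : Fin n → Fin n → Prop) : Prop :=
  (∀ i, ¬ G i i) ∧ ∀ i j, G i j → G j i

/-- A vertex is pendant if it is incident to exactly one 2-cycle. -/
def Pendant {n : ℕ} (G : Fin n → Fin n → Prop) (i : Fin n) : Prop :=
  ∃! j, Adjd G i j

/-- The class 𝒟: simple symmetric digraphs in which every non-pendant vertex is
adjacent to at least one pendant vertex. -/
def InClassD {n : ℕ} (G : Fin n → Fin n → Prop) : Prop :=
  IsSSD G ∧ ∀ i, ¬ Pendant G i → ∃ j, Adjd G i j ∧ Pendant G j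

/-- Strong connectivity: a directed path from every vertex to every other vertex. -/
def StronglyConnected {n : ℕ} (G : Fin n → Fin n → Prop) : Prop :=
  ∀ i j : Fin n, Relation.ReflTransGen G i j

/-- An unordered pair `e` is a 2-cycle of `G`. -/
def IsEdge {n : ℕ} (G : Fin n → Fin n → Prop) (e : Sym2 (Fin n)) : Prop :=
  ∃ i j, e = s(i, j) ∧ Adjd G i j

/-- A matching: a set of pairwise vertex-disjoint 2-cycles. -/
def IsMatching {n : ℕ} (G : Fin n → Fin n → Prop) (M : Finset (Sym2 (Fin n))) : Prop :=
  (∀ e ∈ M, IsEdge G e) ∧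
  ∀ e ∈ M, ∀ f ∈ M, e ≠ f → ∀ v : Fin n, v ∈ e → v ∉ f

/-- A maximum matching: a matching of maximum cardinality. -/
def IsMaxMatching {n : ℕ} (G : Fin n → Fin n → Prop) (M : Finset (Sym2 (Fin n))) : Prop :=
  IsMatching G M ∧ ∀ M', IsMatching G M' → M'.card ≤ M.card

/-- A cycle chain, recorded by its list of (distinct) vertices `i₁, …, i_{m+1}`. -/
def IsCycleChain {n : ℕ} (G : Fin n → Fin n → Prop) (c : List (Fin n)) : Prop :=
  c.Nodup ∧ 2 ≤ c.length ∧ c.Chain' (Adjd G)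

/-- A cycle chain from `i` to `j`. -/
def IsCycleChainBtw {n : ℕ} (G : Fin n → Fin n → Prop) (i j : Fin n) (c : List (Fin n)) : Prop :=
  IsCycleChain G c ∧ c.head? = some i ∧ c.getLast? = some j

/-- The list of 2-cycles of a cycle chain. -/
def chainEdges {n : ℕ} (c : List (Fin n)) : List (Sym2 (Fin n)) :=
  List.zipWith (fun a b => s(a, b)) c c.tail

/-- The cycle chain `c` is alternating with respect to `M`: its 2-cycles are alternately
in `M` and outside `M`, with the first and last 2-cycle in `M` (so its length is odd). -/
def IsAltChain {n : ℕ} (M : Finset (Sym2 (Fin n))) (c : List (Fin n)) : Prop :=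
  Odd (chainEdges c).length ∧
  ∀ k (h : k < (chainEdges c).length), ((chainEdges c).get ⟨k, h⟩ ∈ M ↔ Even k)

/-- The digraph of a square matrix: edge `(i,j)` iff `A i j ≠ 0`. -/
def DA {n : ℕ} (A : Matrix (Fin n) (Fin n) ℝ) : Fin n → Fin n → Prop :=
  fun i j => A i j ≠ 0

/-- The cycle product `a_{ij} a_{ji}` of a 2-cycle. -/
def cycProd {n : ℕ} (A : Matrix (Fin n) (Fin n) ℝ) (e : Sym2 (Fin n)) : ℝ :=
  Sym2.lift ⟨fun i j => A i j * A j i, fun i j => mul_comm _ _⟩ e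

/-- The matching product η(M) of a matching `M`. -/
noncomputable def matchProd {n : ℕ} (A : Matrix (Fin n) (Fin n) ℝ)
    (M : Finset (Sym2 (Fin n))) : ℝ :=
  ∏ e ∈ M, cycProd A e

/-- The (finite) collection of all maximum matchings of `D(A)`. -/
noncomputable def maxMatchings {n : ℕ} (A : Matrix (Fin n) (Fin n) ℝ) :
    Finset (Finset (Sym2 (Fin n))) :=
  {M | IsMaxMatching (DA A) M}.toFinite.toFinset

/-- Δ_A: the sum of the matching products over all maximum matchings of `D(A)`. -/
noncomputable def Delta {n : ℕ} (A : Matrix (Fin n) (Fin n) ℝ) : ℝ :=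
  ∑ M ∈ maxMatchings A, matchProd A M

/-- 𝕄(i,j): maximum matchings with respect to which some cycle chain from `i` to `j`
is an alternating cycle chain. -/
def MMset {n : ℕ} (A : Matrix (Fin n) (Fin n) ℝ) (i j : Fin n) :
    Set (Finset (Sym2 (Fin n))) :=
  {M | IsMaxMatching (DA A) M ∧ ∃ c, IsCycleChainBtw (DA A) i j c ∧ IsAltChain M c}

/-- `i` and `j` are maximally matchable: 𝕄(i,j) ≠ ∅. -/
def MaxMatchable {n : ℕ} (A : Matrix (Fin n) (Fin n) ℝ) (i j : Fin n) : Prop :=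
  (MMset A i j).Nonempty

open scoped Classical in
/-- The (unique) alternating cycle chain from `i` to `j`, when it exists. -/
noncomputable def theChain {n : ℕ} (A : Matrix (Fin n) (Fin n) ℝ) (i j : Fin n) :
    List (Fin n) :=
  if h : ∃ c, IsCycleChainBtw (DA A) i j c ∧ ∃ M ∈ MMset A i j, IsAltChain M c
  then h.choose else []

/-- The path product along a cycle chain: `a_{i₁ i₂} a_{i₂ i₃} ⋯ a_{i_m i_{m+1}}`. -/
def pathProd {n : ℕ} (A : Matrix (Fin n) (Fin n) ℝ) (c : List (Fin n)) : ℝ :=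
  (List.zipWith (fun a b => A a b) c c.tail).prod

open scoped Classical in
/-- β_{ij} = (−1)^{(m−1)/2} P_m(i,j) for maximally matchable `i, j`, and `0` otherwise. -/
noncomputable def beta {n : ℕ} (A : Matrix (Fin n) (Fin n) ℝ) (i j : Fin n) : ℝ :=
  if MaxMatchable A i j then
    (-1 : ℝ) ^ (((theChain A i j).length - 2) / 2) * pathProd A (theChain A i j)
  else 0

/-- β̄_{i,j}(M): product of the cycle products of the 2-cycles of `M` not contained in
the alternating cycle chain from `i` to `j`. -/
noncomputable def betaBar {n : ℕ} (A : Matrix (Fin n) (Fin n) ℝ) (i j : Fin n)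
    (M : Finset (Sym2 (Fin n))) : ℝ :=
  ∏ e ∈ M.filter (fun e => e ∉ chainEdges (theChain A i j)), cycProd A e

/-- μ_{ij} = β_{ij} · Σ_{M ∈ 𝕄(i,j)} β̄_{i,j}(M). -/
noncomputable def mu {n : ℕ} (A : Matrix (Fin n) (Fin n) ℝ) (i j : Fin n) : ℝ :=
  beta A i j * ∑ M ∈ (MMset A i j).toFinite.toFinset, betaBar A i j M

/-- `X` is a group inverse of `A`. -/
def IsGroupInverse {n : ℕ} (A X : Matrix (Fin n) (Fin n) ℝ) : Prop :=
  A * X * A = A ∧ X * A * X = X ∧ A * X = X * A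

/-- A tree digraph: strongly connected and all of its cycles have length 2. -/
def IsTreeDigraph {n : ℕ} (G : Fin n → Fin n → Prop) : Prop :=
  StronglyConnected G ∧
  ∀ (a : Fin n) (l : List (Fin n)), (a :: l).Nodup → List.Chain G a l →
    G ((a :: l).getLast (List.cons_ne_nil a l)) a → (a :: l).length = 2

/-- A star tree digraph: a tree digraph with a center adjacent to every other vertex,
every other vertex being adjacent only to the center. -/
def IsStarTree {n : ℕ} (G : Fin n → Fin n → Prop) : Prop :=
  IsTreeDigraph G ∧
  ∃ c : Fin n, (∀ j, j ≠ c → Adjd G c j) ∧ ∀ i j, Adjd G i j → i = c ∨ j = c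

/-- A corona digraph: a simple symmetric digraph in which each non-pendant vertex is
adjacent to exactly one pendant vertex. -/
def IsCorona {n : ℕ} (G : Fin n → Fin n → Prop) : Prop :=
  IsSSD G ∧ ∀ i, ¬ Pendant G i → ∃! j, Adjd G i j ∧ Pendant G j

/-- 𝕄(i): the maximum matchings in which vertex `i` is matched. -/
noncomputable def MMi {n : ℕ} (A : Matrix (Fin n) (Fin n) ℝ) (i : Fin n) :
    Finset (Finset (Sym2 (Fin n))) :=
  {M | IsMaxMatching (DA A) M ∧ ∃ e ∈ M, i ∈ e}.toFinite.toFinset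


/-!
Let `L` be a set of pairwise non-adjacent pendant vertices such that every other vertex has a
neighbour in `L`; in a digraph of class `𝒟` the pendant vertices are such a set, after dropping
one of any two adjacent ones. Every maximum matching matches each vertex `v ∉ L` to a neighbour
in `L`, so maximum matchings are choice functions and `Δ_A = ∏_{v ∉ L} S_v`, where
`S_v = ∑_{u ∈ L} a_{vu} a_{uv}`. An alternating cycle chain has either one 2-cycle, with an
endpoint in `L`, or three, with both ends in `L`; the matchings of `𝕄(i,j)` are free off the
chain, so `μ_{ij} = β_{ij} ∏_{v ∉ L ∪ C_m(i,j)} S_v`. Listing `L` first, `A = [[0, C], [B, P]]`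
with `B C = diag S`, and the matrix `(μ_{ij} / Δ_A)` is `[[-C S⁻¹ P S⁻¹ B, C S⁻¹], [S⁻¹ B, 0]]`,
which block multiplication shows to be the group inverse of `A`.
-/

open Finset
open scoped Classical

theorem Finset.sum_piFinset_filter_prod {ι κ R : Type*} [Fintype ι] [DecidableEq ι]
    [DecidableEq κ] [CommSemiring R] (t : ι → Finset κ) (p : ι → Prop) [DecidablePred p]
    (f : ι → κ) (hf : ∀ i, p i → f i ∈ t i) (g : ι → κ → R) :
    ∑ k ∈ Fintype.piFinset t with ∀ i, p i → k i = f i, ∏ i with ¬ p i, g i (k i) =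
      ∏ i with ¬ p i, ∑ u ∈ t i, g i u := by
  have hpi : {k ∈ Fintype.piFinset t | ∀ i, p i → k i = f i} =
      Fintype.piFinset fun i => if p i then {f i} else t i := by
    ext k
    simp only [mem_filter, Fintype.mem_piFinset]
    refine ⟨fun h i => ?_, fun h => ⟨fun i => ?_, fun i hi => ?_⟩⟩
    · split_ifs with hi
      exacts [mem_singleton.2 (h.2 i hi), h.1 i]
    · have hki := h i
      by_cases hi : p i
      · rw [if_pos hi, mem_singleton] at hki
        exact hki ▸ hf i hi
      · rwa [if_neg hi] at hki
    · have hki := h i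
      rwa [if_pos hi, mem_singleton] at hki
  simp only [hpi, prod_filter]
  refine (prod_univ_sum _ fun i u => if ¬ p i then g i u else 1).symm.trans
    (prod_congr rfl fun i _ => ?_)
  by_cases hi : p i <;> simp [hi]

section BlockGroupInverse

variable {l m R : Type*} [Fintype l] [Fintype m] [DecidableEq l] [DecidableEq m] [Ring R]
  {C : Matrix l m R} {B : Matrix m l R} {P E : Matrix m m R}

variable (C B P E) in
def zeroBlockGroupInverse : Matrix (l ⊕ m) (l ⊕ m) R :=
  fromBlocks (-(C * E * P * E * B)) (C * E) (E * B) 0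

theorem fromBlocks_zero_mul_zeroBlockGroupInverse (hE : B * C * E = 1) :
    fromBlocks 0 C B P * zeroBlockGroupInverse C B P E = fromBlocks (C * E * B) 0 0 1 := by
  simp [zeroBlockGroupInverse, fromBlocks_multiply, ← Matrix.mul_assoc, hE]

theorem zeroBlockGroupInverse_mul_fromBlocks_zero (hE : E * B * C = 1) :
    zeroBlockGroupInverse C B P E * fromBlocks 0 C B P = fromBlocks (C * E * B) 0 0 1 := by
  have hE' : ∀ X : Matrix l m R, X * E * B * C = X := fun X => by
    rw [Matrix.mul_assoc, Matrix.mul_assoc, ← Matrix.mul_assoc E, hE, Matrix.mul_one]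
  simp [zeroBlockGroupInverse, fromBlocks_multiply, hE, hE']

theorem zeroBlockGroupInverse_spec (h₁ : B * C * E = 1) (h₂ : E * B * C = 1) :
    fromBlocks 0 C B P * zeroBlockGroupInverse C B P E * fromBlocks 0 C B P =
        fromBlocks 0 C B P ∧
      zeroBlockGroupInverse C B P E * fromBlocks 0 C B P * zeroBlockGroupInverse C B P E =
        zeroBlockGroupInverse C B P E ∧
      fromBlocks 0 C B P * zeroBlockGroupInverse C B P E =
        zeroBlockGroupInverse C B P E * fromBlocks 0 C B P := by
  have hE' : ∀ X : Matrix l m R, X * E * B * C = X := fun X => by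
    rw [Matrix.mul_assoc, Matrix.mul_assoc, ← Matrix.mul_assoc E, h₂, Matrix.mul_one]
  rw [fromBlocks_zero_mul_zeroBlockGroupInverse h₁, zeroBlockGroupInverse_mul_fromBlocks_zero h₂]
  refine ⟨?_, ?_, rfl⟩ <;>
    simp [zeroBlockGroupInverse, fromBlocks_multiply, ← Matrix.mul_assoc, hE']

end BlockGroupInverse

section GroupInverse

variable {n : ℕ} {A X Y : Matrix (Fin n) (Fin n) ℝ}

theorem IsGroupInverse.unique (hX : IsGroupInverse A X) (hY : IsGroupInverse A Y) : X = Y := by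
  obtain ⟨hX₁, hX₂, hX₃⟩ := hX
  obtain ⟨hY₁, hY₂, hY₃⟩ := hY
  have hXY : X * A = Y * A :=
    calc X * A = X * A * (Y * A) := by rw [Matrix.mul_assoc X, ← Matrix.mul_assoc A, hY₁]
      _ = A * X * A * Y := by rw [← hX₃, ← hY₃]; simp only [Matrix.mul_assoc]
      _ = Y * A := by rw [hX₁, hY₃]
  calc X = X * A * X := hX₂.symm
    _ = Y * (A * X) := by rw [hXY, Matrix.mul_assoc]
    _ = Y * (A * Y) := by rw [hX₃, hXY, hY₃]
    _ = Y := by rw [← Matrix.mul_assoc, hY₂]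

theorem isGroupInverse_of_submatrix {ι : Type*} [Fintype ι] [DecidableEq ι] (e : ι ≃ Fin n)
    (h : A.submatrix e e * X.submatrix e e * A.submatrix e e = A.submatrix e e ∧
      X.submatrix e e * A.submatrix e e * X.submatrix e e = X.submatrix e e ∧
      A.submatrix e e * X.submatrix e e = X.submatrix e e * A.submatrix e e) :
    IsGroupInverse A X := by
  have hφ : ∀ Z, reindexAlgEquiv ℝ ℝ e.symm Z = Z.submatrix e e := fun _ => rfl
  simp only [← hφ, ← map_mul, (reindexAlgEquiv ℝ ℝ e.symm).injective.eq_iff] at h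
  exact h

end GroupInverse

section Digraph

variable {n : ℕ} {G : Fin n → Fin n → Prop} {i j u v w : Fin n}

theorem Adjd.symm (h : Adjd G i j) : Adjd G j i :=
  ⟨h.1.symm, h.2.2, h.2.1⟩

theorem Pendant.eq_of_adjd (hu : Pendant G u) (hv : Adjd G u v) (hw : Adjd G u w) : v = w :=
  hu.unique hv hw

theorem not_pendant_of_adjd (hv : Adjd G u v) (hw : Adjd G u w) (hvw : v ≠ w) :
    ¬ Pendant G u :=
  fun hu => hvw (hu.eq_of_adjd hv hw)

theorem IsMatching.eq_of_mem {M : Finset (Sym2 (Fin n))} (hM : IsMatching G M)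
    {e f : Sym2 (Fin n)} (he : e ∈ M) (hf : f ∈ M) (hve : v ∈ e) (hvf : v ∈ f) : e = f := by
  by_contra hef
  exact hM.2 e he f hf hef v hve hvf

theorem IsMatching.card_le {M : Finset (Sym2 (Fin n))} (hM : IsMatching G M)
    {t : Finset (Fin n)} (ht : ∀ e ∈ M, ∃ v ∈ t, v ∈ e) : #M ≤ #t :=
  card_le_card_of_forall_subsingleton (fun e v => v ∈ e) ht
    fun _ _ _ he _ hf => hM.eq_of_mem he.1 hf.1 he.2 hf.2

theorem mem_of_mem_chainEdges {c : List (Fin n)} {e : Sym2 (Fin n)} (he : e ∈ chainEdges c)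
    (hv : v ∈ e) : v ∈ c := by
  induction c with
  | nil => simp [chainEdges] at he
  | cons a l ih =>
    cases l with
    | nil => simp [chainEdges] at he
    | cons b l =>
      rcases List.mem_cons.1 (show e ∈ s(a, b) :: chainEdges (b :: l) from he) with rfl | he
      · rcases Sym2.mem_iff.1 hv with rfl | rfl <;> simp
      · exact List.mem_cons_of_mem a (ih he)

end Digraph

structure IsLeafSet {n : ℕ} (G : Fin n → Fin n → Prop) (L : Finset (Fin n)) : Prop where
  pendant : ∀ u ∈ L, Pendant G u
  not_adjd : ∀ u ∈ L, ∀ v ∈ L, ¬ Adjd G u v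
  exists_adjd : ∀ v ∉ L, ∃ u ∈ L, Adjd G v u

/-- Of two adjacent pendant vertices only the smaller one is taken. -/
theorem InClassD.exists_isLeafSet {n : ℕ} {G : Fin n → Fin n → Prop} (hD : InClassD G) :
    ∃ L, IsLeafSet G L := by
  refine ⟨({u | Pendant G u ∧ ∀ v, Adjd G u v → Pendant G v → u < v} : Finset (Fin n)),
    ?_, ?_, ?_⟩
  · intro u hu
    exact (mem_filter.1 hu).2.1
  · intro u hu v hv huv
    have hlt := (mem_filter.1 hu).2.2 v huv (mem_filter.1 hv).2.1
    exact lt_asymm hlt ((mem_filter.1 hv).2.2 u huv.symm (mem_filter.1 hu).2.1)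
  · intro v hv
    simp only [mem_filter, mem_univ, true_and, not_and, not_forall, not_lt] at hv
    by_cases hpv : Pendant G v
    · obtain ⟨w, hvw, hpw, hwv⟩ := hv hpv
      refine ⟨w, mem_filter.2 ⟨mem_univ _, hpw, fun x hwx _ => ?_⟩, hvw⟩
      rw [← hpw.eq_of_adjd hvw.symm hwx]
      exact lt_of_le_of_ne hwv hvw.1.symm
    · obtain ⟨u, hvu, hpu⟩ := hD.2 v hpv
      refine ⟨u, mem_filter.2 ⟨mem_univ _, hpu, fun x hux hpx => ?_⟩, hvu⟩
      exact absurd (hpu.eq_of_adjd hvu.symm hux ▸ hpx) hpv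

section LeafMatching

variable {n : ℕ} (G : Fin n → Fin n → Prop) (L : Finset (Fin n))

noncomputable def leafNbrs (v : Fin n) : Finset (Fin n) := {u ∈ L | Adjd G v u}

noncomputable def leafChoices : Finset ({v // v ∉ L} → Fin n) :=
  Fintype.piFinset fun v => leafNbrs G L v

noncomputable def leafMatching (k : {v // v ∉ L} → Fin n) : Finset (Sym2 (Fin n)) :=
  univ.image fun v => s(v.1, k v)

variable {G L} {k : {v // v ∉ L} → Fin n} {M : Finset (Sym2 (Fin n))} {u v w : Fin n}

theorem mem_leafChoices : k ∈ leafChoices G L ↔ ∀ v, k v ∈ L ∧ Adjd G v (k v) := by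
  simp [leafChoices, leafNbrs, Fintype.mem_piFinset]

theorem sym2_eq_iff_of_notMem_of_mem {v u v' u' : Fin n} (hv : v ∉ L) (hu' : u' ∈ L) :
    s(v, u) = s(v', u') ↔ v = v' ∧ u = u' := by
  refine ⟨fun h => (Sym2.eq_iff.1 h).resolve_right ?_, fun h => h.1 ▸ h.2 ▸ rfl⟩
  rintro ⟨rfl, -⟩
  exact hv hu'

theorem mem_leafMatching (hv : v ∉ L) (hu : u ∈ L) :
    s(v, u) ∈ leafMatching L k ↔ k ⟨v, hv⟩ = u := by
  simp only [leafMatching, mem_image, mem_univ, true_and]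
  constructor
  · rintro ⟨v', hv'⟩
    obtain ⟨rfl, rfl⟩ := (sym2_eq_iff_of_notMem_of_mem v'.2 hu).1 hv'
    rfl
  · rintro rfl
    exact ⟨⟨v, hv⟩, rfl⟩

theorem notMem_leafMatching {v v' : Fin n} (hv : v ∉ L) (hv' : v' ∉ L)
    (hk : k ∈ leafChoices G L) : s(v, v') ∉ leafMatching L k := by
  simp only [leafMatching, mem_image, mem_univ, true_and, not_exists]
  intro x hx
  rcases Sym2.eq_iff.1 hx with ⟨-, h⟩ | ⟨-, h⟩
  · exact hv' (h ▸ (mem_leafChoices.1 hk x).1)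
  · exact hv (h ▸ (mem_leafChoices.1 hk x).1)

theorem leafMatching_injOn : Set.InjOn (leafMatching L) (leafChoices G L) := by
  intro k hk k' _ h
  funext v
  have hmem : s(v.1, k v) ∈ leafMatching L k' := h ▸ mem_image_of_mem _ (mem_univ v)
  exact ((mem_leafMatching v.2 (mem_leafChoices.1 hk v).1).1 hmem).symm

theorem injective_leafEdge (hk : k ∈ leafChoices G L) :
    Function.Injective fun v : {v // v ∉ L} => s(v.1, k v) := fun x y hxy =>
  Subtype.ext ((sym2_eq_iff_of_notMem_of_mem x.2 (mem_leafChoices.1 hk y).1).1 hxy).1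

theorem card_leafMatching (hk : k ∈ leafChoices G L) : #(leafMatching L k) = #Lᶜ := by
  rw [leafMatching, card_image_of_injective _ (injective_leafEdge hk), card_univ]
  simp [card_compl]

namespace IsLeafSet

variable (hL : IsLeafSet G L)
include hL

theorem notMem_of_adjd (hu : u ∈ L) (huv : Adjd G u v) : v ∉ L :=
  fun hv => hL.not_adjd u hu v hv huv

theorem exists_leafChoices_eq_on (p : {v // v ∉ L} → Prop) (f : {v // v ∉ L} → Fin n)
    (hf : ∀ v, p v → f v ∈ L ∧ Adjd G v (f v)) :
    ∃ k ∈ leafChoices G L, ∀ v, p v → k v = f v := by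
  choose g hg using fun v : {v // v ∉ L} => hL.exists_adjd v v.2
  refine ⟨fun v => if p v then f v else g v, mem_leafChoices.2 fun v => ?_, fun v hv => if_pos hv⟩
  split_ifs with hv
  exacts [hf v hv, hg v]

theorem isMatching_leafMatching (hk : k ∈ leafChoices G L) :
    IsMatching G (leafMatching L k) := by
  simp only [IsMatching, leafMatching, mem_image, mem_univ, true_and, forall_exists_index,
    forall_apply_eq_imp_iff]
  refine ⟨fun v => ⟨v, k v, rfl, (mem_leafChoices.1 hk v).2⟩, fun x y hxy w hwx hwy => ?_⟩
  have hx := mem_leafChoices.1 hk x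
  have hy := mem_leafChoices.1 hk y
  apply hxy
  rcases Sym2.mem_iff.1 hwx with rfl | rfl <;> rcases Sym2.mem_iff.1 hwy with h | h
  · rw [Subtype.ext h]
  · exact absurd (h ▸ hy.1) x.2
  · exact absurd (h ▸ hx.1) y.2
  · rw [Subtype.ext ((hL.pendant _ hx.1).eq_of_adjd hx.2.symm (h ▸ hy.2.symm))]

theorem card_le_of_isMatching (hM : IsMatching G M) : #M ≤ #Lᶜ := by
  refine hM.card_le fun e he => ?_
  obtain ⟨x, y, rfl, hxy⟩ := hM.1 e he
  by_cases hx : x ∈ L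
  · exact ⟨y, mem_compl.2 (hL.notMem_of_adjd hx hxy), Sym2.mem_mk_right x y⟩
  · exact ⟨x, mem_compl.2 hx, Sym2.mem_mk_left x y⟩

theorem isMaxMatching_leafMatching (hk : k ∈ leafChoices G L) :
    IsMaxMatching G (leafMatching L k) :=
  ⟨hL.isMatching_leafMatching hk,
    fun _ hM' => (card_leafMatching hk).symm ▸ hL.card_le_of_isMatching hM'⟩

theorem card_eq_of_isMaxMatching (hM : IsMaxMatching G M) : #M = #Lᶜ := by
  obtain ⟨k, hk, -⟩ := hL.exists_leafChoices_eq_on (fun _ => False) Subtype.val (by simp)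
  exact le_antisymm (hL.card_le_of_isMatching hM.1)
    (card_leafMatching hk ▸ hM.2 _ (hL.isMatching_leafMatching hk))

/-- Otherwise all edges of `M` would have an endpoint in `(Lᶜ).erase w`, too few for `M`. -/
theorem exists_mem_forall_notMem_eq (hM : IsMaxMatching G M) (hw : w ∉ L) :
    ∃ e ∈ M, ∀ v ∈ e, v ∉ L → v = w := by
  by_contra! h
  have hle := hM.1.card_le (t := Lᶜ.erase w) fun e he => by
    obtain ⟨v, hve, hvL, hvw⟩ := h e he
    exact ⟨v, mem_erase.2 ⟨hvw, mem_compl.2 hvL⟩, hve⟩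
  have hlt := card_erase_lt_of_mem (mem_compl.2 hw)
  rw [hL.card_eq_of_isMaxMatching hM] at hle
  omega

theorem exists_leaf_of_isMaxMatching (hM : IsMaxMatching G M) (hv : v ∉ L) :
    ∃ u ∈ L, Adjd G v u ∧ s(v, u) ∈ M := by
  obtain ⟨e, he, hev⟩ := hL.exists_mem_forall_notMem_eq hM hv
  obtain ⟨x, y, rfl, hxy⟩ := hM.1.1 e he
  by_cases hx : x ∈ L
  · obtain rfl := hev y (Sym2.mem_mk_right x y) (hL.notMem_of_adjd hx hxy)
    exact ⟨x, hx, hxy.symm, Sym2.eq_swap ▸ he⟩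
  · obtain rfl := hev x (Sym2.mem_mk_left x y) hx
    refine ⟨y, ?_, hxy, he⟩
    by_contra hy
    exact hxy.1 (hev y (Sym2.mem_mk_right _ y) hy).symm

theorem exists_eq_leafMatching (hM : IsMaxMatching G M) :
    ∃ k ∈ leafChoices G L, M = leafMatching L k := by
  choose k hkL hadj hkM using fun v : {v // v ∉ L} => hL.exists_leaf_of_isMaxMatching hM v.2
  have hk : k ∈ leafChoices G L := mem_leafChoices.2 fun v => ⟨hkL v, hadj v⟩
  refine ⟨k, hk, (eq_of_subset_of_card_le ?_ ?_).symm⟩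
  · simp only [leafMatching, image_subset_iff, mem_univ, forall_const]
    exact hkM
  · rw [card_leafMatching hk, hL.card_eq_of_isMaxMatching hM]

end IsLeafSet

end LeafMatching

section AltChain

variable {n : ℕ} {G : Fin n → Fin n → Prop} {L : Finset (Fin n)} {M : Finset (Sym2 (Fin n))}
  {a b c d i j : Fin n}

theorem isAltChain_pair_iff : IsAltChain M [a, b] ↔ s(a, b) ∈ M := by
  have hedges : chainEdges [a, b] = [s(a, b)] := rfl
  rw [IsAltChain, hedges]
  refine ⟨fun h => by simpa using h.2 0 (by simp), fun h => ⟨by simp, fun k hk => ?_⟩⟩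
  obtain rfl : k = 0 := by simpa using hk
  simpa using h

theorem isAltChain_quad_iff :
    IsAltChain M [a, b, c, d] ↔ s(a, b) ∈ M ∧ s(b, c) ∉ M ∧ s(c, d) ∈ M := by
  have hedges : chainEdges [a, b, c, d] = [s(a, b), s(b, c), s(c, d)] := rfl
  rw [IsAltChain, hedges]
  constructor
  · intro h
    refine ⟨by simpa using h.2 0 (by simp), fun hbc => ?_, by simpa using h.2 2 (by simp)⟩
    exact absurd ((h.2 1 (by simp)).1 hbc) (by decide)
  · rintro ⟨h₁, h₂, h₃⟩
    refine ⟨⟨1, rfl⟩, fun k hk => ?_⟩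
    simp only [List.length_cons, List.length_nil] at hk
    interval_cases k <;> simp [h₁, h₂, h₃]

theorem isCycleChainBtw_pair (hij : Adjd G i j) : IsCycleChainBtw G i j [i, j] :=
  ⟨⟨by simp [hij.1], le_rfl, List.isChain_pair.2 hij⟩, rfl, rfl⟩

namespace IsLeafSet

variable (hL : IsLeafSet G L)
include hL

theorem notMem_of_adjd_of_adjd (hba : Adjd G b a) (hbc : Adjd G b c) (hac : a ≠ c) :
    b ∉ L :=
  fun hb => not_pendant_of_adjd hba hbc hac (hL.pendant b hb)

theorem mem_or_mem_of_isMaxMatching (hM : IsMaxMatching G M) (hab : s(a, b) ∈ M) :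
    a ∈ L ∨ b ∈ L := by
  obtain ⟨k, hk, rfl⟩ := hL.exists_eq_leafMatching hM
  by_contra! h
  exact notMem_leafMatching h.1 h.2 hk hab

/-- Matched 2-cycles have an endpoint in `L`, while interior vertices of a chain are not
pendant. -/
theorem isAltChain_cases (hM : IsMaxMatching G M) {c : List (Fin n)}
    (hc : IsCycleChainBtw G i j c) (halt : IsAltChain M c) :
    (c = [i, j] ∧ Adjd G i j ∧ (i ∈ L ∨ j ∈ L)) ∨
      ∃ b b', c = [i, b, b', j] ∧ i ∈ L ∧ j ∈ L ∧ Adjd G i b ∧ Adjd G b b' ∧ Adjd G b' j := by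
  obtain ⟨⟨hnd, hlen, hch⟩, hhead, hlast⟩ := hc
  rcases c with _ | ⟨x₀, _ | ⟨x₁, _ | ⟨x₂, _ | ⟨x₃, _ | ⟨x₄, c⟩⟩⟩⟩⟩
  · simp at hlen
  · simp at hlen
  · obtain rfl : x₀ = i := by simpa using hhead
    obtain rfl : x₁ = j := by simpa using hlast
    exact Or.inl ⟨rfl, List.isChain_pair.1 hch,
      hL.mem_or_mem_of_isMaxMatching hM (isAltChain_pair_iff.1 halt)⟩
  · have hlen : (chainEdges [x₀, x₁, x₂]).length = 2 := rfl
    exact absurd (hlen ▸ halt.1) (by decide)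
  · obtain rfl : x₀ = i := by simpa using hhead
    obtain rfl : x₃ = j := by simpa using hlast
    change List.IsChain _ _ at hch
    simp only [List.isChain_cons_cons, List.isChain_singleton, and_true] at hch
    obtain ⟨h₀₁, h₁₂, h₂₃⟩ := hch
    simp only [List.nodup_cons, List.mem_cons, List.not_mem_nil, or_false] at hnd
    obtain ⟨hm₀₁, -, hm₂₃⟩ := isAltChain_quad_iff.1 halt
    have hx₁ := hL.notMem_of_adjd_of_adjd h₀₁.symm h₁₂ fun h => hnd.1 (Or.inr (Or.inl h))
    have hx₂ := hL.notMem_of_adjd_of_adjd h₁₂.symm h₂₃ fun h => hnd.2.1 (Or.inr h)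
    exact Or.inr ⟨x₁, x₂, rfl, (hL.mem_or_mem_of_isMaxMatching hM hm₀₁).resolve_right hx₁,
      (hL.mem_or_mem_of_isMaxMatching hM hm₂₃).resolve_left hx₂, h₀₁, h₁₂, h₂₃⟩
  · exfalso
    have hm : s(x₂, x₃) ∈ M := ((halt.2 2 (by simp [chainEdges])).2 (by decide) :)
    change List.IsChain _ _ at hch
    simp only [List.isChain_cons_cons] at hch
    simp only [List.nodup_cons, List.mem_cons] at hnd
    rcases hL.mem_or_mem_of_isMaxMatching hM hm with h | h
    · exact hL.notMem_of_adjd_of_adjd hch.2.1.symm hch.2.2.1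
        (fun h => hnd.2.1 (Or.inr (Or.inl h))) h
    · exact hL.notMem_of_adjd_of_adjd hch.2.2.1.symm hch.2.2.2.1
        (fun h => hnd.2.2.1 (Or.inr (Or.inl h))) h

end IsLeafSet

end AltChain

section LeafWeight

variable {n : ℕ} {A : Matrix (Fin n) (Fin n) ℝ} {L : Finset (Fin n)}
  {k : {v // v ∉ L} → Fin n} {M : Finset (Sym2 (Fin n))} {i j v : Fin n}

variable (A L) in
def leafWeight (v : Fin n) : ℝ := ∑ u ∈ L, A v u * A u v

theorem mem_maxMatchings : M ∈ maxMatchings A ↔ IsMaxMatching (DA A) M := by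
  rw [maxMatchings, Set.Finite.mem_toFinset]
  rfl

theorem IsLeafSet.maxMatchings_eq (hL : IsLeafSet (DA A) L) :
    maxMatchings A = (leafChoices (DA A) L).image (leafMatching L) := by
  ext M
  simp only [mem_maxMatchings, mem_image]
  refine ⟨fun hM => ?_, ?_⟩
  · obtain ⟨k, hk, rfl⟩ := hL.exists_eq_leafMatching hM
    exact ⟨k, hk, rfl⟩
  · rintro ⟨k, hk, rfl⟩
    exact hL.isMaxMatching_leafMatching hk

theorem sum_leafNbrs_cycProd (hv : v ∉ L) :
    ∑ u ∈ leafNbrs (DA A) L v, cycProd A s(v, u) = leafWeight A L v := by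
  rw [leafNbrs, sum_filter, leafWeight]
  refine sum_congr rfl fun u hu => ?_
  split_ifs with hvu
  · rfl
  · simp only [Adjd, DA, not_and, not_not] at hvu
    by_cases h : A v u = 0
    · rw [h, zero_mul]
    · rw [hvu (ne_of_mem_of_not_mem hu hv).symm h, mul_zero]

theorem matchProd_leafMatching (hk : k ∈ leafChoices (DA A) L) :
    matchProd A (leafMatching L k) = ∏ v, cycProd A s(v.1, k v) :=
  prod_image fun _ _ _ _ hxy => injective_leafEdge hk hxy

theorem IsLeafSet.Delta_eq_prod (hL : IsLeafSet (DA A) L) :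
    Delta A = ∏ v ∈ Lᶜ, leafWeight A L v :=
  calc Delta A = ∑ k ∈ leafChoices (DA A) L, ∏ v, cycProd A s(v.1, k v) := by
        rw [Delta, hL.maxMatchings_eq, sum_image leafMatching_injOn]
        exact sum_congr rfl fun k hk => matchProd_leafMatching hk
    _ = ∏ v : {v // v ∉ L}, ∑ u ∈ leafNbrs (DA A) L v, cycProd A s(v.1, u) :=
        (prod_univ_sum (fun v : {v // v ∉ L} => leafNbrs (DA A) L v)
          fun v u => cycProd A s(v.1, u)).symm
    _ = ∏ v : {v // v ∉ L}, leafWeight A L v :=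
        prod_congr rfl fun v _ => sum_leafNbrs_cycProd v.2
    _ = ∏ v ∈ Lᶜ, leafWeight A L v := (prod_subtype Lᶜ (fun _ => mem_compl) _).symm

end LeafWeight

section Mu

variable {n : ℕ} {A : Matrix (Fin n) (Fin n) ℝ} {L : Finset (Fin n)} {i j : Fin n}
  {c : List (Fin n)}

theorem theChain_eq {M : Finset (Sym2 (Fin n))} (hc : IsCycleChainBtw (DA A) i j c)
    (hM : M ∈ MMset A i j) (halt : IsAltChain M c)
    (hunique : ∀ M c', IsMaxMatching (DA A) M → IsCycleChainBtw (DA A) i j c' →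
      IsAltChain M c' → c' = c) :
    theChain A i j = c := by
  have hex : ∃ c, IsCycleChainBtw (DA A) i j c ∧ ∃ M ∈ MMset A i j, IsAltChain M c :=
    ⟨c, hc, M, hM, halt⟩
  rw [theChain, dif_pos hex]
  obtain ⟨hc', M', hM', halt'⟩ := hex.choose_spec
  exact hunique M' _ hM'.1 hc' halt'

theorem betaBar_leafMatching {k : {v // v ∉ L} → Fin n} (hk : k ∈ leafChoices (DA A) L)
    (hchain : theChain A i j = c) (hkc : ∀ v : {v // v ∉ L}, v.1 ∈ c → s(v.1, k v) ∈ chainEdges c) :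
    betaBar A i j (leafMatching L k) = ∏ v : {v // v ∉ L} with v.1 ∉ c, cycProd A s(v.1, k v) := by
  rw [betaBar, hchain, leafMatching, filter_image,
    prod_image fun _ _ _ _ h => injective_leafEdge hk h]
  refine prod_congr (filter_congr fun v _ => ⟨fun h hv => h (hkc v hv), fun hv h => ?_⟩)
    fun _ _ => rfl
  exact hv (mem_of_mem_chainEdges h (Sym2.mem_mk_left _ _))

namespace IsLeafSet

variable (hL : IsLeafSet (DA A) L)
include hL

/-- Off the chain, a matching of `𝕄(i,j)` picks a leaf neighbour of each vertex outside `L`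
independently, so the sum factors. -/
theorem sum_betaBar_eq (hchain : theChain A i j = c) (f : Fin n → Fin n)
    (hf : ∀ v ∉ L, v ∈ c → f v ∈ L ∧ Adjd (DA A) v (f v) ∧ s(v, f v) ∈ chainEdges c)
    (hMM : ∀ k ∈ leafChoices (DA A) L,
      leafMatching L k ∈ MMset A i j ↔ ∀ v : {v // v ∉ L}, v.1 ∈ c → k v = f v) :
    ∑ M ∈ (MMset A i j).toFinite.toFinset, betaBar A i j M =
      ∏ v ∈ Lᶜ with v ∉ c, leafWeight A L v := by
  set K := {k ∈ leafChoices (DA A) L | ∀ v : {v // v ∉ L}, v.1 ∈ c → k v = f v}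
  have hMMset : (MMset A i j).toFinite.toFinset = K.image (leafMatching L) := by
    ext M
    simp only [Set.Finite.mem_toFinset, mem_image, K, mem_filter]
    refine ⟨fun hM => ?_, ?_⟩
    · obtain ⟨k, hk, rfl⟩ := hL.exists_eq_leafMatching hM.1
      exact ⟨k, ⟨hk, (hMM k hk).1 hM⟩, rfl⟩
    · rintro ⟨k, ⟨hk, hkf⟩, rfl⟩
      exact (hMM k hk).2 hkf
  rw [hMMset, sum_image (leafMatching_injOn.mono (coe_subset.2 (filter_subset _ _)))]
  calc ∑ k ∈ K, betaBar A i j (leafMatching L k)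
      = ∑ k ∈ K, ∏ v : {v // v ∉ L} with v.1 ∉ c, cycProd A s(v.1, k v) :=
        sum_congr rfl fun k hk => betaBar_leafMatching (mem_filter.1 hk).1 hchain
          fun v hv => (mem_filter.1 hk).2 v hv ▸ (hf v v.2 hv).2.2
    _ = ∏ v : {v // v ∉ L} with v.1 ∉ c, ∑ u ∈ leafNbrs (DA A) L v, cycProd A s(v.1, u) :=
        sum_piFinset_filter_prod (fun v : {v // v ∉ L} => leafNbrs (DA A) L v) (fun v => v.1 ∈ c)
          (fun v => f v) (fun v hv => by simpa [leafNbrs] using (hf v v.2 hv).imp_right And.left)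
          fun v u => cycProd A s(v.1, u)
    _ = ∏ v : {v // v ∉ L} with v.1 ∉ c, leafWeight A L v :=
        prod_congr rfl fun v _ => sum_leafNbrs_cycProd v.2
    _ = ∏ v ∈ Lᶜ with v ∉ c, leafWeight A L v := by
        rw [prod_filter, prod_filter]
        exact (prod_subtype Lᶜ (fun _ => mem_compl) fun v => if v ∉ c then _ else 1).symm

theorem mu_eq_of_chain (hc : IsCycleChainBtw (DA A) i j c)
    (hunique : ∀ M c', IsMaxMatching (DA A) M → IsCycleChainBtw (DA A) i j c' →
      IsAltChain M c' → c' = c)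
    (f : Fin n → Fin n)
    (hf : ∀ v ∉ L, v ∈ c → f v ∈ L ∧ Adjd (DA A) v (f v) ∧ s(v, f v) ∈ chainEdges c)
    (halt : ∀ k ∈ leafChoices (DA A) L,
      IsAltChain (leafMatching L k) c ↔ ∀ v : {v // v ∉ L}, v.1 ∈ c → k v = f v) :
    mu A i j = (-1) ^ ((c.length - 2) / 2) * pathProd A c *
      ∏ v ∈ Lᶜ with v ∉ c, leafWeight A L v := by
  have hMM : ∀ k ∈ leafChoices (DA A) L,
      leafMatching L k ∈ MMset A i j ↔ ∀ v : {v // v ∉ L}, v.1 ∈ c → k v = f v := by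
    intro k hk
    rw [← halt k hk]
    exact ⟨fun ⟨hM, c', hc', halt'⟩ => hunique _ c' hM hc' halt' ▸ halt',
      fun h => ⟨hL.isMaxMatching_leafMatching hk, c, hc, h⟩⟩
  obtain ⟨k₀, hk₀, hk₀f⟩ := hL.exists_leafChoices_eq_on (fun v => v.1 ∈ c) (fun v => f v)
    fun v hv => (hf v v.2 hv).imp_right And.left
  have hM₀ : leafMatching L k₀ ∈ MMset A i j := (hMM k₀ hk₀).2 hk₀f
  have hchain : theChain A i j = c := theChain_eq hc hM₀ ((halt k₀ hk₀).2 hk₀f) hunique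
  rw [mu, beta, if_pos ⟨_, hM₀⟩, hchain, hL.sum_betaBar_eq hchain f hf hMM]

end IsLeafSet

end Mu

section MuCases

variable {n : ℕ} {A : Matrix (Fin n) (Fin n) ℝ} {L : Finset (Fin n)} {i j b b' : Fin n}

theorem forall_notMem_mem_iff {p : {v // v ∉ L} → Prop} {c : List (Fin n)} :
    (∀ v : {v // v ∉ L}, v.1 ∈ c → p v) ↔ ∀ v ∈ c, ∀ hv : v ∉ L, p ⟨v, hv⟩ :=
  ⟨fun h v hvc hv => h ⟨v, hv⟩ hvc, fun h v hvc => h v.1 hvc v.2⟩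

namespace IsLeafSet

variable (hL : IsLeafSet (DA A) L)
include hL

theorem maxMatchable_cases (h : MaxMatchable A i j) :
    (Adjd (DA A) i j ∧ (i ∈ L ∨ j ∈ L)) ∨
      (i ∈ L ∧ j ∈ L ∧ ∃ b b', Adjd (DA A) i b ∧ Adjd (DA A) b b' ∧ Adjd (DA A) b' j) := by
  obtain ⟨M, hM, c, hc, halt⟩ := h
  rcases hL.isAltChain_cases hM hc halt with ⟨-, hij, hmem⟩ | ⟨b, b', -, hi, hj, hib, hbb', hb'j⟩
  · exact Or.inl ⟨hij, hmem⟩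
  · exact Or.inr ⟨hi, hj, b, b', hib, hbb', hb'j⟩

theorem mu_eq_of_adjd (hij : Adjd (DA A) i j) (hmem : i ∈ L ∨ j ∈ L) :
    mu A i j = A i j * ∏ v ∈ Lᶜ with v ∉ [i, j], leafWeight A L v := by
  have hedges : chainEdges [i, j] = [s(i, j)] := rfl
  rw [hL.mu_eq_of_chain (isCycleChainBtw_pair hij) ?unique (fun v => if v = j then i else j)
    ?matched ?alt]
  · simp [pathProd]
  case unique =>
    intro M c hM hc halt
    rcases hL.isAltChain_cases hM hc halt with ⟨rfl, -⟩ | ⟨b, b', -, hi, hj, -⟩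
    · rfl
    · exact absurd hij (hL.not_adjd i hi j hj)
  case matched =>
    intro v hv hvc
    rw [hedges]
    rcases List.mem_pair.1 hvc with rfl | rfl
    · simpa [hij.1, hij] using hmem.resolve_left hv
    · simpa [hij.symm, Sym2.eq_swap] using hmem.resolve_right hv
  case alt =>
    intro k _
    rw [isAltChain_pair_iff, forall_notMem_mem_iff]
    rcases hmem with hi | hj
    · have hj := hL.notMem_of_adjd hi hij
      rw [Sym2.eq_swap, mem_leafMatching hj hi]
      simp [hi, hj]
    · have hi : i ∉ L := fun hi => hL.not_adjd i hi j hj hij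
      rw [mem_leafMatching hi hj]
      simp [hi, hj, hij.1]

theorem mu_eq_of_adjd_of_adjd_of_adjd (hi : i ∈ L) (hj : j ∈ L) (hib : Adjd (DA A) i b)
    (hbb' : Adjd (DA A) b b') (hb'j : Adjd (DA A) b' j) :
    mu A i j = -(A i b * A b b' * A b' j) * ∏ v ∈ Lᶜ with v ∉ [i, b, b', j], leafWeight A L v := by
  have hb : b ∉ L := hL.notMem_of_adjd hi hib
  have hb' : b' ∉ L := hL.notMem_of_adjd hj hb'j.symm
  have hij : i ≠ j := by
    rintro rfl
    exact hbb'.1 ((hL.pendant i hi).eq_of_adjd hib hb'j.symm)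
  have hc : IsCycleChainBtw (DA A) i j [i, b, b', j] := by
    refine ⟨⟨?_, by simp, ?_⟩, rfl, rfl⟩
    · have hbj : b ≠ j := fun h => hb (h ▸ hj)
      simp [hib.1, hbb'.1, hb'j.1, hij, ne_of_mem_of_not_mem hi hb', hbj]
    · exact List.isChain_cons_cons.2
        ⟨hib, List.isChain_cons_cons.2 ⟨hbb', List.isChain_pair.2 hb'j⟩⟩
  have hedges : chainEdges [i, b, b', j] = [s(i, b), s(b, b'), s(b', j)] := rfl
  rw [hL.mu_eq_of_chain hc ?unique (fun v => if v = b then i else j) ?matched ?alt]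
  · have hpath : pathProd A [i, b, b', j] = A i b * A b b' * A b' j := by
      simp [pathProd, mul_assoc]
    rw [hpath, show ([i, b, b', j].length - 2) / 2 = 1 by simp]
    ring
  case unique =>
    intro M c hM hc halt
    rcases hL.isAltChain_cases hM hc halt with ⟨-, hij', -⟩ | ⟨x, x', rfl, -, -, hix, -, hx'j⟩
    · exact absurd hij' (hL.not_adjd i hi j hj)
    · rw [(hL.pendant i hi).eq_of_adjd hix hib, (hL.pendant j hj).eq_of_adjd hx'j.symm hb'j.symm]
  case matched =>
    intro v hv hvc
    rw [hedges]
    simp only [List.mem_cons, List.not_mem_nil, or_false] at hvc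
    rcases hvc with rfl | rfl | rfl | rfl
    · exact absurd hi hv
    · simpa [hib.symm, Sym2.eq_swap] using hi
    · simpa [hbb'.1.symm, hb'j] using hj
    · exact absurd hj hv
  case alt =>
    intro k hk
    rw [isAltChain_quad_iff, forall_notMem_mem_iff, Sym2.eq_swap, mem_leafMatching hb hi,
      mem_leafMatching hb' hj]
    simp [hi, hj, hb, hb', hbb'.1.symm, notMem_leafMatching hb hb' hk]

end IsLeafSet

end MuCases

section MuDivDelta

variable {n : ℕ} {A : Matrix (Fin n) (Fin n) ℝ} {L : Finset (Fin n)} {i j u u' v v' b b' : Fin n}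

theorem adjd_of_ne_zero (hssd : IsSSD (DA A)) (h : A i j ≠ 0) : Adjd (DA A) i j :=
  ⟨fun hij => hssd.1 i (hij ▸ h), h, hssd.2 i j h⟩

theorem eq_zero_of_not_adjd (hssd : IsSSD (DA A)) (h : ¬ Adjd (DA A) i j) : A i j = 0 :=
  not_not.1 fun h' => h (adjd_of_ne_zero hssd h')

namespace IsLeafSet

variable (hL : IsLeafSet (DA A) L)
include hL

theorem mu_eq_zero_of_notMem_of_notMem (hv : v ∉ L) (hv' : v' ∉ L) : mu A v v' = 0 := by
  rw [mu, beta, if_neg, zero_mul]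
  intro h
  rcases hL.maxMatchable_cases h with ⟨-, h | h⟩ | ⟨h, -⟩
  exacts [hv h, hv' h, hv h]

section

variable (hΔ : Delta A ≠ 0)
include hΔ

theorem prod_filter_leafWeight_ne_zero (p : Fin n → Prop) [DecidablePred p] :
    ∏ v ∈ Lᶜ with p v, leafWeight A L v ≠ 0 := by
  rw [hL.Delta_eq_prod] at hΔ
  exact prod_ne_zero_iff.2 fun v hv => prod_ne_zero_iff.1 hΔ v (mem_filter.1 hv).1

theorem leafWeight_ne_zero (hv : v ∉ L) : leafWeight A L v ≠ 0 := by
  have h := hL.prod_filter_leafWeight_ne_zero hΔ (· = v)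
  rwa [filter_eq', if_pos (mem_compl.2 hv), prod_singleton] at h

theorem mu_div_Delta_eq {c : List (Fin n)} {x : ℝ}
    (hmu : mu A i j = x * ∏ v ∈ Lᶜ with v ∉ c, leafWeight A L v) :
    mu A i j / Delta A = x / ∏ v ∈ Lᶜ with v ∈ c, leafWeight A L v := by
  rw [hmu, hL.Delta_eq_prod, ← prod_filter_mul_prod_filter_not Lᶜ (· ∈ c),
    mul_div_mul_right _ _ (hL.prod_filter_leafWeight_ne_zero hΔ _)]

theorem mu_div_Delta_of_mem_of_notMem (hssd : IsSSD (DA A)) (hu : u ∈ L) (hv : v ∉ L) :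
    mu A u v / Delta A = A u v / leafWeight A L v := by
  by_cases huv : Adjd (DA A) u v
  · rw [hL.mu_div_Delta_eq hΔ (hL.mu_eq_of_adjd huv (Or.inl hu))]
    have hfilter : ({w ∈ Lᶜ | w ∈ [u, v]} : Finset (Fin n)) = {v} := by
      ext w
      simp only [mem_filter, mem_compl, List.mem_pair, mem_singleton]
      constructor
      · rintro ⟨hw, rfl | rfl⟩
        exacts [absurd hu hw, rfl]
      · rintro rfl
        exact ⟨hv, Or.inr rfl⟩
    rw [hfilter, prod_singleton]
  · rw [eq_zero_of_not_adjd hssd huv, zero_div, mu, beta, if_neg, zero_mul, zero_div]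
    intro h
    rcases hL.maxMatchable_cases h with ⟨h, -⟩ | ⟨-, h, -⟩
    exacts [huv h, hv h]

theorem mu_div_Delta_of_notMem_of_mem (hssd : IsSSD (DA A)) (hv : v ∉ L) (hu : u ∈ L) :
    mu A v u / Delta A = A v u / leafWeight A L v := by
  by_cases hvu : Adjd (DA A) v u
  · rw [hL.mu_div_Delta_eq hΔ (hL.mu_eq_of_adjd hvu (Or.inr hu))]
    have hfilter : ({w ∈ Lᶜ | w ∈ [v, u]} : Finset (Fin n)) = {v} := by
      ext w
      simp only [mem_filter, mem_compl, List.mem_pair, mem_singleton]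
      constructor
      · rintro ⟨hw, rfl | rfl⟩
        exacts [rfl, absurd hu hw]
      · rintro rfl
        exact ⟨hv, Or.inl rfl⟩
    rw [hfilter, prod_singleton]
  · rw [eq_zero_of_not_adjd hssd hvu, zero_div, mu, beta, if_neg, zero_mul, zero_div]
    intro h
    rcases hL.maxMatchable_cases h with ⟨h, -⟩ | ⟨h, -⟩
    exacts [hvu h, hv h]

theorem mu_div_Delta_of_mem_of_mem (hssd : IsSSD (DA A)) (hu : u ∈ L) (hu' : u' ∈ L)
    (hub : Adjd (DA A) u b) (hub' : Adjd (DA A) u' b') :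
    mu A u u' / Delta A =
      -(A u b * A b b' * A b' u') / (leafWeight A L b * leafWeight A L b') := by
  have hb := hL.notMem_of_adjd hu hub
  have hb' := hL.notMem_of_adjd hu' hub'
  by_cases hbb' : Adjd (DA A) b b'
  · rw [hL.mu_div_Delta_eq hΔ (hL.mu_eq_of_adjd_of_adjd_of_adjd hu hu' hub hbb' hub'.symm)]
    have hfilter : ({w ∈ Lᶜ | w ∈ [u, b, b', u']} : Finset (Fin n)) = {b, b'} := by
      ext w
      simp only [mem_filter, mem_compl, List.mem_cons, List.not_mem_nil, or_false, mem_insert,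
        mem_singleton]
      constructor
      · rintro ⟨hw, rfl | rfl | rfl | rfl⟩
        exacts [absurd hu hw, Or.inl rfl, Or.inr rfl, absurd hu' hw]
      · rintro (rfl | rfl)
        exacts [⟨hb, Or.inr (Or.inl rfl)⟩, ⟨hb', Or.inr (Or.inr (Or.inl rfl))⟩]
    rw [hfilter, prod_pair hbb'.1]
  · rw [eq_zero_of_not_adjd hssd hbb', mul_zero, zero_mul, neg_zero, zero_div, mu, beta, if_neg,
      zero_mul, zero_div]
    intro h
    rcases hL.maxMatchable_cases h with ⟨h, -⟩ | ⟨-, -, x, x', hux, hxx', hx'u'⟩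
    · exact hL.not_adjd u hu u' hu' h
    · rw [(hL.pendant u hu).eq_of_adjd hux hub,
        (hL.pendant u' hu').eq_of_adjd hx'u'.symm hub'] at hxx'
      exact hbb' hxx'

end

end IsLeafSet

end MuDivDelta

section LeafBlocks

variable {n : ℕ} {A : Matrix (Fin n) (Fin n) ℝ} {L : Finset (Fin n)} {u u' b b' : Fin n}

variable (A L) in
abbrev leafSplit :
    Matrix ({v // v ∈ L} ⊕ {v // v ∉ L}) ({v // v ∈ L} ⊕ {v // v ∉ L}) ℝ :=
  A.submatrix (Equiv.sumCompl (· ∈ L)) (Equiv.sumCompl (· ∈ L))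

namespace IsLeafSet

variable (hL : IsLeafSet (DA A) L) (hssd : IsSSD (DA A))
include hL hssd

theorem toBlocks₁₁_leafSplit : (leafSplit A L).toBlocks₁₁ = 0 := by
  ext u u'
  exact eq_zero_of_not_adjd hssd (hL.not_adjd u u.2 u' u'.2)

theorem toBlocks₂₁_mul_toBlocks₁₂_leafSplit :
    (leafSplit A L).toBlocks₂₁ * (leafSplit A L).toBlocks₁₂ = diagonal (leafWeight A L ∘ (↑)) := by
  ext v v'
  rw [mul_apply, diagonal_apply]
  split_ifs with hvv'
  · subst hvv'
    exact sum_coe_sort L fun u => A v u * A u v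
  · refine sum_eq_zero fun u _ => ?_
    by_contra hne
    obtain ⟨h₁, h₂⟩ := mul_ne_zero_iff.1 hne
    exact hvv' (Subtype.ext ((hL.pendant u u.2).eq_of_adjd (adjd_of_ne_zero hssd h₁).symm
      (adjd_of_ne_zero hssd h₂)))

theorem toBlocks_leafSplit_mul_apply (d : {v // v ∉ L} → ℝ) (hu : u ∈ L) (hu' : u' ∈ L)
    (hub : Adjd (DA A) u b) (hub' : Adjd (DA A) u' b') :
    ((leafSplit A L).toBlocks₁₂ * diagonal d * (leafSplit A L).toBlocks₂₂ * diagonal d *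
        (leafSplit A L).toBlocks₂₁) ⟨u, hu⟩ ⟨u', hu'⟩ =
      A u b * d ⟨b, hL.notMem_of_adjd hu hub⟩ * A b b' * d ⟨b', hL.notMem_of_adjd hu' hub'⟩ *
        A b' u' := by
  rw [mul_apply, sum_eq_single ⟨b', hL.notMem_of_adjd hu' hub'⟩, mul_diagonal, mul_apply,
    sum_eq_single ⟨b, hL.notMem_of_adjd hu hub⟩]
  · simp [toBlocks₁₂, toBlocks₂₁, toBlocks₂₂, mul_diagonal]
  · intro x _ hx
    have hux : A u x = 0 := eq_zero_of_not_adjd hssd fun h =>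
      hx (Subtype.ext ((hL.pendant u hu).eq_of_adjd h hub))
    simp [toBlocks₁₂, mul_diagonal, hux]
  · simp
  · intro x _ hx
    have hxu' : A x u' = 0 := eq_zero_of_not_adjd hssd fun h =>
      hx (Subtype.ext ((hL.pendant u' hu').eq_of_adjd h.symm hub'))
    simp [toBlocks₂₁, hxu']
  · simp

theorem submatrix_sumCompl_mu_div_Delta (hΔ : Delta A ≠ 0) :
    (of fun i j => mu A i j / Delta A).submatrix (Equiv.sumCompl (· ∈ L))
        (Equiv.sumCompl (· ∈ L)) =
      zeroBlockGroupInverse (leafSplit A L).toBlocks₁₂ (leafSplit A L).toBlocks₂₁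
        (leafSplit A L).toBlocks₂₂ (diagonal fun v => (leafWeight A L v)⁻¹) := by
  ext (⟨u, hu⟩ | ⟨v, hv⟩) (⟨u', hu'⟩ | ⟨v', hv'⟩)
  · obtain ⟨b, hub, -⟩ := hL.pendant u hu
    obtain ⟨b', hub', -⟩ := hL.pendant u' hu'
    rw [zeroBlockGroupInverse, fromBlocks_apply₁₁, neg_apply,
      hL.toBlocks_leafSplit_mul_apply hssd _ hu hu' hub hub']
    simp [hL.mu_div_Delta_of_mem_of_mem hΔ hssd hu hu' hub hub']
    ring
  · simpa [zeroBlockGroupInverse, toBlocks₁₂, mul_diagonal, div_eq_mul_inv] using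
      hL.mu_div_Delta_of_mem_of_notMem hΔ hssd hu hv'
  · simpa [zeroBlockGroupInverse, toBlocks₂₁, diagonal_mul, div_eq_mul_inv, mul_comm] using
      hL.mu_div_Delta_of_notMem_of_mem hΔ hssd hv hu'
  · simp [zeroBlockGroupInverse, hL.mu_eq_zero_of_notMem_of_notMem hv hv']

theorem isGroupInverse_mu_div_Delta (hΔ : Delta A ≠ 0) :
    IsGroupInverse A (of fun i j => mu A i j / Delta A) := by
  have hsplit : leafSplit A L = fromBlocks 0 (leafSplit A L).toBlocks₁₂
      (leafSplit A L).toBlocks₂₁ (leafSplit A L).toBlocks₂₂ := by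
    rw [← hL.toBlocks₁₁_leafSplit hssd, fromBlocks_toBlocks]
  have hinv : diagonal (leafWeight A L ∘ (↑)) *
      diagonal (fun v : {v // v ∉ L} => (leafWeight A L v)⁻¹) = 1 := by
    rw [diagonal_mul_diagonal, ← diagonal_one]
    exact congrArg diagonal (funext fun v => mul_inv_cancel₀ (hL.leafWeight_ne_zero hΔ v.2))
  refine isGroupInverse_of_submatrix (Equiv.sumCompl (· ∈ L)) ?_
  rw [show A.submatrix _ _ = leafSplit A L from rfl, hsplit,
    hL.submatrix_sumCompl_mu_div_Delta hssd hΔ]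
  refine zeroBlockGroupInverse_spec ?_ ?_
  · rw [hL.toBlocks₂₁_mul_toBlocks₁₂_leafSplit hssd, hinv]
  · rw [Matrix.mul_assoc, hL.toBlocks₂₁_mul_toBlocks₁₂_leafSplit hssd, diagonal_mul_diagonal,
      ← diagonal_one]
    exact congrArg diagonal (funext fun v => inv_mul_cancel₀ (hL.leafWeight_ne_zero hΔ v.2))

end IsLeafSet

end LeafBlocks

theorem group_inverse_entries_of_tree_classD_general {n : ℕ} (A : Matrix (Fin n) (Fin n) ℝ)
    (hD : InClassD (DA A)) (hΔ : Delta A ≠ 0) :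
    (∃ X, IsGroupInverse A X) ∧
      ∀ X, IsGroupInverse A X → ∀ i j, X i j = mu A i j / Delta A := by
  obtain ⟨L, hL⟩ := hD.exists_isLeafSet
  have hX := hL.isGroupInverse_mu_div_Delta hD.1 hΔ
  exact ⟨⟨_, hX⟩, fun X hX' i j => by rw [hX'.unique hX, of_apply]⟩

/-- Theorem (Nandi, Thm 1.2): if `D(A)` is a tree digraph in `𝒟` and `Δ_A ≠ 0`, then the
group inverse `A^#` exists and its entries are `α_{ij} = μ_{ij}/Δ_A`. -/
theorem group_inverse_entries_of_tree_classD {n : ℕ} (A : Matrix (Fin n) (Fin n) ℝ)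
    (hT : IsTreeDigraph (DA A)) (hD : InClassD (DA A)) (hΔ : Delta A ≠ 0) :
    (∃ X, IsGroupInverse A X) ∧
      ∀ X, IsGroupInverse A X → ∀ i j, X i j = mu A i j / Delta A :=
  group_inverse_entries_of_tree_classD_general A hD hΔ
end

section
/- Let D be a strongly connected digraph belonging to the class 𝒟. Then no non-pendant 2-cycle of D belongs to any maximum matching of D. -/
open Matrix

lemma adjd_symm {n : ℕ} {G : Fin n → Fin n → Prop} {i j : Fin n} (h : Adjd G i j) :
    Adjd G j i := ⟨h.1.symm, h.2.2, h.2.1⟩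

lemma pendant_unmatched {n : ℕ} {G : Fin n → Fin n → Prop} {M : Finset (Sym2 (Fin n))}
    (hM : IsMatching G M) {p i : Fin n} (hp : Pendant G p) (hpi : Adjd G p i)
    {e : Sym2 (Fin n)} (he : e ∈ M) (hie : i ∈ e) (hpe : p ∉ e) :
    ∀ f ∈ M, p ∉ f := by
  intro f hf hpf
  obtain ⟨a, b, rfl, hab⟩ := hM.1 f hf
  have hif : i ∈ s(a, b) := by
    rcases Sym2.mem_iff.1 hpf with rfl | rfl
    · have : b = i := hp.unique hab hpi
      subst this; exact Sym2.mem_mk_right _ _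
    · have : a = i := hp.unique (adjd_symm hab) hpi
      subst this; exact Sym2.mem_mk_left _ _
  by_cases hef : e = s(a, b)
  · subst hef; exact hpe hpf
  · exact hM.2 e he _ hf hef i hie hif

/-- Proposition: in a strongly connected digraph of class `𝒟`, no non-pendant 2-cycle can
belong to a maximum matching, i.e. every 2-cycle of a maximum matching has a pendant vertex. -/
theorem no_nonpendant_cycle_in_max_matching {n : ℕ} (G : Fin n → Fin n → Prop)
    (hD : InClassD G) (hSC : StronglyConnected G) :
    ∀ M : Finset (Sym2 (Fin n)), IsMaxMatching G M → ∀ e ∈ M, ∃ v ∈ e, Pendant G v := by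
  classical
  intro M hM e heM
  by_contra hno
  push_neg at hno
  obtain ⟨i, j, rfl, hij⟩ := hM.1.1 e heM
  have hiNP : ¬ Pendant G i := hno i (Sym2.mem_mk_left _ _)
  have hjNP : ¬ Pendant G j := hno j (Sym2.mem_mk_right _ _)
  obtain ⟨p, hip, hpP⟩ := hD.2 i hiNP
  obtain ⟨q, hjq, hqP⟩ := hD.2 j hjNP
  have hpi : Adjd G p i := adjd_symm hip
  have hqj : Adjd G q j := adjd_symm hjq
  have hpj : p ≠ j := fun h => hjNP (h ▸ hpP)
  have hqi : q ≠ i := fun h => hiNP (h ▸ hqP)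
  have hpq : p ≠ q := by
    rintro rfl
    exact hij.1 (hpP.unique hpi hqj)
  have hpe : p ∉ s(i, j) := by
    rw [Sym2.mem_iff]
    rintro (rfl | rfl)
    · exact hpi.1 rfl
    · exact hpj rfl
  have hqe : q ∉ s(i, j) := by
    rw [Sym2.mem_iff]
    rintro (rfl | rfl)
    · exact hqi rfl
    · exact hqj.1 rfl
  have hpunm := pendant_unmatched hM.1 hpP hpi heM (Sym2.mem_mk_left _ _) hpe
  have hqunm := pendant_unmatched hM.1 hqP hqj heM (Sym2.mem_mk_right _ _) hqe
  set M' : Finset (Sym2 (Fin n)) := insert s(p, i) (insert s(q, j) (M.erase s(i, j))) with hM'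
  have hqjnotin : s(q, j) ∉ M.erase s(i, j) := by
    intro h
    exact hqunm _ (Finset.mem_of_mem_erase h) (Sym2.mem_mk_left _ _)
  have hpine : s(p, i) ≠ s(q, j) := by
    intro h
    rw [Sym2.eq_iff] at h
    rcases h with ⟨rfl, rfl⟩ | ⟨rfl, rfl⟩
    · exact hpq rfl
    · exact hpj rfl
  have hpinotin : s(p, i) ∉ insert s(q, j) (M.erase s(i, j)) := by
    rw [Finset.mem_insert]
    rintro (h | h)
    · exact hpine h
    · exact hpunm _ (Finset.mem_of_mem_erase h) (Sym2.mem_mk_left _ _)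
  have hcard : M'.card = M.card + 1 := by
    rw [hM', Finset.card_insert_of_notMem hpinotin,
      Finset.card_insert_of_notMem hqjnotin, Finset.card_erase_of_mem heM]
    have : 1 ≤ M.card := Finset.card_pos.2 ⟨_, heM⟩
    omega
  -- M' is a matching
  have hdisj : ∀ f ∈ M, ∀ v : Fin n, v ∈ s(i, j) → v ∈ f → f = s(i, j) := by
    intro f hf v hve hvf
    by_contra hne
    exact hM.1.2 _ heM f hf (Ne.symm hne) v hve hvf
  have hmatch : IsMatching G M' := by
    constructor
    · intro f hf
      rw [hM', Finset.mem_insert, Finset.mem_insert] at hf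
      rcases hf with rfl | rfl | hf
      · exact ⟨p, i, rfl, hpi⟩
      · exact ⟨q, j, rfl, hqj⟩
      · exact hM.1.1 f (Finset.mem_of_mem_erase hf)
    · intro f hf g hg hfg v hvf hvg
      rw [hM', Finset.mem_insert, Finset.mem_insert] at hf hg
      have hmemM : ∀ h ∈ M.erase s(i, j), ∀ w : Fin n, w ∈ s(p, i) → w ∉ h := by
        intro h hh w hw
        rcases Sym2.mem_iff.1 hw with rfl | rfl
        · exact hpunm _ (Finset.mem_of_mem_erase hh)
        · intro hwh
          exact Finset.ne_of_mem_erase hh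
            (hdisj _ (Finset.mem_of_mem_erase hh) w (Sym2.mem_mk_left _ _) hwh)
      have hmemM' : ∀ h ∈ M.erase s(i, j), ∀ w : Fin n, w ∈ s(q, j) → w ∉ h := by
        intro h hh w hw
        rcases Sym2.mem_iff.1 hw with rfl | rfl
        · exact hqunm _ (Finset.mem_of_mem_erase hh)
        · intro hwh
          exact Finset.ne_of_mem_erase hh
            (hdisj _ (Finset.mem_of_mem_erase hh) w (Sym2.mem_mk_right _ _) hwh)
      have hpiqj : ∀ w : Fin n, w ∈ s(p, i) → w ∉ s(q, j) := by
        intro w hw hw'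
        rcases Sym2.mem_iff.1 hw with rfl | rfl <;>
          rcases Sym2.mem_iff.1 hw' with h | h
        · exact hpq h
        · exact hpj h
        · exact hqi h.symm
        · exact hij.1 h
      rcases hf with rfl | rfl | hf <;> rcases hg with rfl | rfl | hg
      · exact absurd rfl hfg
      · exact hpiqj v hvf hvg
      · exact hmemM _ hg v hvf hvg
      · exact hpiqj v hvg hvf
      · exact absurd rfl hfg
      · exact hmemM' _ hg v hvf hvg
      · exact hmemM _ hf v hvg hvf
      · exact hmemM' _ hf v hvg hvf
      · exact hM.1.2 _ (Finset.mem_of_mem_erase hf) _ (Finset.mem_of_mem_erase hg) hfg v hvf hvg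
  have := hM.2 M' hmatch
  omega
end
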